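/- (Entanglement rate bound for Rényi entropy, α > 2, commutator form.) Let α > 2 and let d ≥ 2 be an integer satisfying d^(−2(α−1)) < α − √(α² − 1). Let n ≥ 1 and let X, Y be n×n complex matrices with 0 ≤ X ≤ Y ≤ I, Tr X = 1/d², and Tr Y = 1. Then (α/(α−1)) · d · ‖[X, Y^(α−1)]‖₁ ≤ 9 · (α/(α−1)) · (1/d) · (1 − d^(−2(α−1))). -/

import Mathlib

open scoped ComplexOrder

/-- The trace norm of a complex matrix: `Tr √(Aᴴ A)`, the sum of singular values. -/
noncomputable def traceNorm {n : ℕ} (A : Matrix (Fin n) (Fin n) ℂ) : ℝ :=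
  (((Matrix.posSemidef_conjTranspose_mul_self A).1.eigenvectorUnitary : Matrix (Fin n) (Fin n) ℂ) *
    Matrix.diagonal ((fun x : ℝ => ((√x : ℝ) : ℂ)) ∘ (Matrix.posSemidef_conjTranspose_mul_self A).1.eigenvalues) *
    (star (Matrix.posSemidef_conjTranspose_mul_self A).1.eigenvectorUnitary : Matrix (Fin n) (Fin n) ℂ)).trace.re

/-- For a Hermitian matrix `Y = Σⱼ yⱼ |φⱼ⟩⟨φⱼ|`, the matrix `f(Y) = Σⱼ f(yⱼ) |φⱼ⟩⟨φⱼ|`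
(junk value `0` if `Y` is not Hermitian). -/
noncomputable def matFun {n : ℕ} (f : ℝ → ℝ) (Y : Matrix (Fin n) (Fin n) ℂ) :
    Matrix (Fin n) (Fin n) ℂ :=
  if hY : Y.IsHermitian then
    (hY.eigenvectorUnitary : Matrix (Fin n) (Fin n) ℂ) *
      Matrix.diagonal (fun i => (f (hY.eigenvalues i) : ℂ)) *
      (star hY.eigenvectorUnitary : Matrix (Fin n) (Fin n) ℂ)
  else 0

/-!
Write `F = Y^(α-1)`. Since `X` and `F` are Hermitian, `i[X, F]` is Hermitian, so `‖[X, F]‖₁` is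
the sum of `|⟨u, [X, F] u⟩|` over an orthonormal eigenbasis of `i[X, F]`. With `z = ⟨u, X F u⟩`
this summand is `|z - z̄| ≤ 2|z|`, and writing `X = B* B`,
`2|z| = 2|⟨B u, B F u⟩| ≤ ‖B u‖² + ‖B F u‖² = ⟨u, X u⟩ + ⟨F u, X F u⟩`.
Summing, `‖[X, F]‖₁ ≤ Tr X + Tr (F X F) ≤ 2 Tr X = 2 / d²`, where `Tr (F X F) ≤ Tr X` because
`0 ≤ Y ≤ 1` forces `F² ≤ 1`. The claimed bound is weaker than `2 α / ((α - 1) d)` as soon as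
`d^(-2(α-1)) ≤ 1/4`, which holds for `d ≥ 2` and `α ≥ 2`.
-/

open Matrix
open scoped MatrixOrder

namespace Matrix

section RCLike

variable {ι 𝕜 : Type*} [Fintype ι] [RCLike 𝕜]

lemma two_mul_norm_star_dotProduct_le (a b : ι → 𝕜) :
    2 * ‖star a ⬝ᵥ b‖ ≤ RCLike.re (star a ⬝ᵥ a) + RCLike.re (star b ⬝ᵥ b) := by
  have hself : ∀ c : ι → 𝕜, RCLike.re (star c ⬝ᵥ c) = ∑ k, ‖c k‖ ^ 2 := fun c => by
    simp only [dotProduct, Pi.star_apply, RCLike.star_def, RCLike.conj_mul, map_sum,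
      ← RCLike.ofReal_pow, RCLike.ofReal_re]
  rw [hself, hself, ← Finset.sum_add_distrib]
  calc 2 * ‖star a ⬝ᵥ b‖ ≤ 2 * ∑ k, ‖a k‖ * ‖b k‖ := by
        gcongr
        exact (norm_sum_le _ _).trans_eq (by simp)
    _ ≤ ∑ k, (‖a k‖ ^ 2 + ‖b k‖ ^ 2) := by
        rw [Finset.mul_sum]
        gcongr with k
        linarith [two_mul_le_add_sq ‖a k‖ ‖b k‖]

lemma PosSemidef.two_mul_norm_dotProduct_mulVec_le [DecidableEq ι] {X : Matrix ι ι 𝕜}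
    (hX : X.PosSemidef) (v w : ι → 𝕜) :
    2 * ‖star v ⬝ᵥ (X *ᵥ w)‖ ≤ RCLike.re (star v ⬝ᵥ (X *ᵥ v)) + RCLike.re (star w ⬝ᵥ (X *ᵥ w)) := by
  obtain ⟨B, rfl⟩ := CStarAlgebra.nonneg_iff_eq_star_mul_self.mp hX.nonneg
  have h : ∀ x y : ι → 𝕜, star x ⬝ᵥ ((star B * B) *ᵥ y) = star (B *ᵥ x) ⬝ᵥ (B *ᵥ y) := fun x y => by
    rw [← mulVec_mulVec, dotProduct_mulVec, star_mulVec, star_eq_conjTranspose]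
  simpa only [h] using two_mul_norm_star_dotProduct_le (B *ᵥ v) (B *ᵥ w)

lemma IsHermitian.star_mulVec_dotProduct {A : Matrix ι ι 𝕜} (hA : A.IsHermitian) (v w : ι → 𝕜) :
    star (A *ᵥ v) ⬝ᵥ w = star v ⬝ᵥ (A *ᵥ w) := by
  rw [dotProduct_mulVec, star_mulVec, hA.eq]

lemma norm_dotProduct_commutator_mulVec_le [DecidableEq ι] {X F : Matrix ι ι 𝕜}
    (hX : X.PosSemidef) (hF : F.IsHermitian) (u : ι → 𝕜) :
    ‖star u ⬝ᵥ ((X * F - F * X) *ᵥ u)‖ ≤ RCLike.re (star u ⬝ᵥ ((X + F * X * F) *ᵥ u)) := by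
  set z := star u ⬝ᵥ (X *ᵥ (F *ᵥ u))
  have hFX : star u ⬝ᵥ ((F * X) *ᵥ u) = star z := by
    rw [← mulVec_mulVec, ← hF.star_mulVec_dotProduct, star_dotProduct,
      hX.1.star_mulVec_dotProduct]
  have hFXF : star u ⬝ᵥ ((F * X * F) *ᵥ u) = star (F *ᵥ u) ⬝ᵥ (X *ᵥ (F *ᵥ u)) := by
    rw [← mulVec_mulVec, ← mulVec_mulVec, ← hF.star_mulVec_dotProduct]
  calc ‖star u ⬝ᵥ ((X * F - F * X) *ᵥ u)‖ = ‖z - star z‖ := by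
        rw [sub_mulVec, dotProduct_sub, ← mulVec_mulVec, hFX]
    _ ≤ 2 * ‖z‖ := (norm_sub_le _ _).trans_eq (by rw [norm_star]; ring)
    _ ≤ _ := by
        rw [add_mulVec, dotProduct_add, map_add, hFXF]
        exact hX.two_mul_norm_dotProduct_mulVec_le u (F *ᵥ u)

lemma PosSemidef.re_trace_mul_mul_le [DecidableEq ι] {X F : Matrix ι ι 𝕜} (hX : X.PosSemidef)
    (hF : (1 - F * F).PosSemidef) : RCLike.re (F * X * F).trace ≤ RCLike.re X.trace := by
  obtain ⟨B, rfl⟩ := CStarAlgebra.nonneg_iff_eq_star_mul_self.mp hX.nonneg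
  have h := RCLike.nonneg_iff.mp (hF.mul_mul_conjTranspose_same B).trace_nonneg |>.1
  have hcyc : (B * (F * F) * Bᴴ).trace = (F * (star B * B) * F).trace := by
    rw [trace_mul_comm, ← Matrix.mul_assoc, ← Matrix.mul_assoc, trace_mul_comm,
      ← Matrix.mul_assoc, star_eq_conjTranspose]
  rw [Matrix.mul_sub, Matrix.sub_mul, Matrix.mul_one, trace_sub, map_sub, hcyc,
    trace_mul_comm, ← star_eq_conjTranspose] at h
  linarith

lemma IsHermitian.trace_cfc [DecidableEq ι] {A : Matrix ι ι 𝕜} (hA : A.IsHermitian) (f : ℝ → ℝ) :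
    (cfc f A).trace = ∑ i, (f (hA.eigenvalues i) : 𝕜) := by
  rw [hA.cfc_eq, IsHermitian.cfc, Unitary.conjStarAlgAut_apply, trace_mul_cycle,
    Unitary.coe_star_mul_self, Matrix.one_mul, trace_diagonal]
  rfl

lemma sum_star_dotProduct_mulVec_orthonormalBasis [DecidableEq ι]
    (b : OrthonormalBasis ι 𝕜 (EuclideanSpace 𝕜 ι))
    (A : Matrix ι ι 𝕜) : ∑ i, star ⇑(b i) ⬝ᵥ (A *ᵥ ⇑(b i)) = A.trace := by
  rw [← A.trace_toLin_eq (PiLp.basisFun 2 𝕜 ι), ← toLpLin_eq_toLin,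
    LinearMap.trace_eq_sum_inner _ b]
  simp only [EuclideanSpace.inner_eq_star_dotProduct, toLpLin_apply, dotProduct_comm]

end RCLike

variable {n : ℕ}

lemma traceNorm_eq_re_trace_abs (A : Matrix (Fin n) (Fin n) ℂ) :
    traceNorm A = (CFC.abs A).trace.re := by
  rw [CFC.abs, star_eq_conjTranspose,
    CFC.sqrt_eq_real_sqrt _ (posSemidef_conjTranspose_mul_self A).nonneg,
    cfcₙ_eq_cfc (hf0 := Real.sqrt_zero),
    (posSemidef_conjTranspose_mul_self A).1.cfc_eq, IsHermitian.cfc, Unitary.conjStarAlgAut_apply]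
  rfl

lemma traceNorm_smul (c : ℂ) (A : Matrix (Fin n) (Fin n) ℂ) :
    traceNorm (c • A) = ‖c‖ * traceNorm A := by
  rw [traceNorm_eq_re_trace_abs, traceNorm_eq_re_trace_abs, CFC.abs_smul, trace_smul]
  simp

lemma IsHermitian.traceNorm_eq_sum_abs_eigenvalues {H : Matrix (Fin n) (Fin n) ℂ}
    (hH : H.IsHermitian) : traceNorm H = ∑ i, |hH.eigenvalues i| := by
  rw [traceNorm_eq_re_trace_abs, CFC.abs_eq_cfc_norm H hH, hH.trace_cfc]
  simp

lemma IsHermitian.traceNorm_le_re_trace {H P : Matrix (Fin n) (Fin n) ℂ} (hH : H.IsHermitian)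
    (h : ∀ u, ‖star u ⬝ᵥ (H *ᵥ u)‖ ≤ (star u ⬝ᵥ (P *ᵥ u)).re) : traceNorm H ≤ P.trace.re := by
  have hev : ∀ i, |hH.eigenvalues i| =
      ‖star ⇑(hH.eigenvectorBasis i) ⬝ᵥ (H *ᵥ ⇑(hH.eigenvectorBasis i))‖ := fun i => by
    have hunit : star ⇑(hH.eigenvectorBasis i) ⬝ᵥ ⇑(hH.eigenvectorBasis i) = 1 := by
      rw [dotProduct_comm, ← EuclideanSpace.inner_eq_star_dotProduct,
        hH.eigenvectorBasis.inner_eq_one]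
    rw [hH.mulVec_eigenvectorBasis, dotProduct_smul, hunit, norm_smul, norm_one, mul_one,
      Real.norm_eq_abs]
  rw [hH.traceNorm_eq_sum_abs_eigenvalues,
    ← sum_star_dotProduct_mulVec_orthonormalBasis hH.eigenvectorBasis P, Complex.re_sum]
  exact Finset.sum_le_sum fun i _ => (hev i).trans_le (h _)

lemma traceNorm_commutator_le {X F : Matrix (Fin n) (Fin n) ℂ} (hX : X.PosSemidef)
    (hF : F.IsHermitian) : traceNorm (X * F - F * X) ≤ (X + F * X * F).trace.re := by
  have hH : (Complex.I • (X * F - F * X)).IsHermitian := by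
    rw [IsHermitian, conjTranspose_smul, conjTranspose_sub, conjTranspose_mul, conjTranspose_mul,
      hX.1.eq, hF.eq, Complex.star_def, Complex.conj_I, neg_smul, ← smul_neg, neg_sub]
  have h := hH.traceNorm_le_re_trace (P := X + F * X * F) fun u => by
    rw [smul_mulVec, dotProduct_smul, norm_smul, Complex.norm_I, one_mul]
    exact norm_dotProduct_commutator_mulVec_le hX hF u
  rwa [traceNorm_smul, Complex.norm_I, one_mul] at h

lemma IsHermitian.matFun_eq_cfc {Y : Matrix (Fin n) (Fin n) ℂ} (hY : Y.IsHermitian)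
    (f : ℝ → ℝ) : matFun f Y = cfc f Y := by
  rw [matFun, dif_pos hY, hY.cfc_eq, IsHermitian.cfc, Unitary.conjStarAlgAut_apply]
  rfl

lemma isHermitian_matFun (f : ℝ → ℝ) (Y : Matrix (Fin n) (Fin n) ℂ) :
    (matFun f Y).IsHermitian := by
  by_cases hY : Y.IsHermitian
  · rw [hY.matFun_eq_cfc]
    exact cfc_predicate f Y
  · rw [matFun, dif_neg hY]
    exact isHermitian_zero

lemma IsHermitian.posSemidef_one_sub_matFun_mul_self {Y : Matrix (Fin n) (Fin n) ℂ}
    (hY : Y.IsHermitian) {f : ℝ → ℝ} (hf : ∀ x ∈ spectrum ℝ Y, |f x| ≤ 1) :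
    (1 - matFun f Y * matFun f Y).PosSemidef := by
  have hcont (g : ℝ → ℝ) : ContinuousOn g (spectrum ℝ Y) := by
    rw [continuousOn_iff_continuous_domRestrict]
    fun_prop
  rw [hY.matFun_eq_cfc, ← cfc_mul f f Y (hcont _) (hcont _), ← cfc_one ℝ Y,
    ← cfc_sub _ _ Y (hcont _) (hcont _), ← nonneg_iff_posSemidef]
  exact cfc_nonneg fun x hx => by
    have hfx := abs_le.mp (hf x hx)
    simp only [Pi.one_apply]
    nlinarith

lemma PosSemidef.spectrum_subset_Icc {Y : Matrix (Fin n) (Fin n) ℂ} (hY : Y.PosSemidef)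
    (hY1 : (1 - Y).PosSemidef) : spectrum ℝ Y ⊆ Set.Icc 0 1 := fun x hx =>
  ⟨spectrum_nonneg_of_nonneg hY.nonneg hx,
    (le_algebraMap_iff_spectrum_le (r := (1 : ℝ)) hY.1).mp (by simpa [le_iff] using hY1) x hx⟩

lemma PosSemidef.posSemidef_one_sub_matFun_rpow_mul_self {Y : Matrix (Fin n) (Fin n) ℂ}
    (hY : Y.PosSemidef) (hY1 : (1 - Y).PosSemidef) {γ : ℝ} (hγ : 0 ≤ γ) :
    (1 - matFun (· ^ γ) Y * matFun (· ^ γ) Y).PosSemidef :=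
  hY.1.posSemidef_one_sub_matFun_mul_self fun x hx => by
    obtain ⟨hx0, hx1⟩ := hY.spectrum_subset_Icc hY1 hx
    rw [abs_of_nonneg (Real.rpow_nonneg hx0 γ)]
    exact Real.rpow_le_one hx0 hx1 hγ

end Matrix

lemma rpow_neg_le_one_div_four {d β : ℝ} (hd : 2 ≤ d) (hβ : 2 ≤ β) : d ^ (-β) ≤ 1 / 4 := by
  calc d ^ (-β) ≤ d ^ (-2 : ℝ) := Real.rpow_le_rpow_of_exponent_le (by linarith) (by linarith)
    _ = 1 / d ^ 2 := by rw [Real.rpow_neg (by linarith), Real.rpow_two, one_div]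
    _ ≤ 1 / 4 := by gcongr; nlinarith

theorem renyi_entanglement_rate_bound_general {n : ℕ} (α : ℝ) (hα : 2 < α)
    (d : ℕ) (hd : 2 ≤ d)
    (X Y : Matrix (Fin n) (Fin n) ℂ)
    (hX : X.PosSemidef) (hXY : (Y - X).PosSemidef)
    (hYI : ((1 : Matrix (Fin n) (Fin n) ℂ) - Y).PosSemidef)
    (hTrX : X.trace = 1 / (d : ℂ) ^ 2) :
    (α / (α - 1)) * d *
        traceNorm (X * matFun (fun t => t ^ (α - 1)) Y -
          matFun (fun t => t ^ (α - 1)) Y * X) ≤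
      9 * (α / (α - 1)) * (1 / d) * (1 - (d : ℝ) ^ (-(2 * (α - 1)))) := by
  set F := matFun (fun t => t ^ (α - 1)) Y
  have hY : Y.PosSemidef := by simpa using hXY.add hX
  have hFF : (1 - F * F).PosSemidef :=
    hY.posSemidef_one_sub_matFun_rpow_mul_self hYI (by linarith)
  have hTrXre : X.trace.re = 1 / (d : ℝ) ^ 2 := by
    rw [hTrX]
    simp [← Complex.ofReal_natCast, ← Complex.ofReal_pow]
  have hnorm : traceNorm (X * F - F * X) ≤ 2 * X.trace.re := by
    have h : traceNorm (X * F - F * X) ≤ (X + F * X * F).trace.re :=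
      traceNorm_commutator_le hX (isHermitian_matFun _ Y)
    have h' : (F * X * F).trace.re ≤ X.trace.re := hX.re_trace_mul_mul_le hFF
    rw [trace_add, Complex.add_re] at h
    linarith
  have hd' : (2 : ℝ) ≤ d := by exact_mod_cast hd
  have hε := rpow_neg_le_one_div_four hd' (show 2 ≤ 2 * (α - 1) by linarith)
  have hα1 : 0 < α - 1 := by linarith
  have hc : 0 < α / (α - 1) / d := by positivity
  calc α / (α - 1) * d * traceNorm (X * F - F * X) ≤ α / (α - 1) * d * (2 * (1 / d ^ 2)) := by
        rw [← hTrXre]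
        gcongr
    _ = 2 * (α / (α - 1) / d) := by
        field_simp
    _ ≤ 9 * (α / (α - 1)) * (1 / d) * (1 - d ^ (-(2 * (α - 1)))) := by
        rw [mul_one_div, mul_div_assoc]
        nlinarith

theorem renyi_entanglement_rate_bound {n : ℕ} (hn : 1 ≤ n) (α : ℝ) (hα : 2 < α)
    (d : ℕ) (hd : 2 ≤ d)
    (hdα : (d : ℝ) ^ (-(2 * (α - 1))) < α - Real.sqrt (α ^ 2 - 1))
    (X Y : Matrix (Fin n) (Fin n) ℂ)
    (hX : X.PosSemidef) (hXY : (Y - X).PosSemidef)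
    (hYI : ((1 : Matrix (Fin n) (Fin n) ℂ) - Y).PosSemidef)
    (hTrX : X.trace = 1 / (d : ℂ) ^ 2) (hTrY : Y.trace = 1) :
    (α / (α - 1)) * d *
        traceNorm (X * matFun (fun t => t ^ (α - 1)) Y -
          matFun (fun t => t ^ (α - 1)) Y * X) ≤
      9 * (α / (α - 1)) * (1 / d) * (1 - (d : ℝ) ^ (-(2 * (α - 1)))) :=
  renyi_entanglement_rate_bound_general α hα d hd X Y hX hXY hYI hTrX
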